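/- In the vertex-cover reduction graph G' (as above), there exists an s–t path of weighted cost 4|E| + k avoiding V(G) if and only if G has a vertex cover of size at most k. -/
import Mathlib


open Finset

/-- Vertices of the reduction graph `G'`: original vertices `v` of `G`, heavy pendant
vertices `v̂`, gadget vertices `(e, c)` with `c = 0,1,2,3` standing for `U(e),D(e),L(e),R(e)`,
and the two endpoints `s` (code `0`) and `t` (code `1`). -/
abbrev V16 (n m : ℕ) := (Fin n ⊕ Fin n) ⊕ ((Fin m × Fin 4) ⊕ Fin 2)

/-- Original vertex `vᵢ`. -/
def orig {n m : ℕ} (i : Fin n) : V16 n m := Sum.inl (Sum.inl i)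
/-- Heavy pendant vertex `v̂ᵢ`. -/
def hat {n m : ℕ} (i : Fin n) : V16 n m := Sum.inl (Sum.inr i)
/-- Gadget vertex: `gad j 0 = U(eⱼ)`, `gad j 1 = D(eⱼ)`, `gad j 2 = L(eⱼ)`, `gad j 3 = R(eⱼ)`. -/
def gad {n m : ℕ} (j : Fin m) (c : Fin 4) : V16 n m := Sum.inr (Sum.inl (j, c))
/-- The source `s`. -/
def s16 {n m : ℕ} : V16 n m := Sum.inr (Sum.inr 0)
/-- The target `t`. -/
def t16 {n m : ℕ} : V16 n m := Sum.inr (Sum.inr 1)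

/-- Adjacency (one orientation suffices; it is symmetrized by `fromRel`):
pendant edges `vᵢ–v̂ᵢ`; gadget edges `u–L(e)`, `R(e)–v`, `L(e)–U(e)`, `L(e)–D(e)`,
`U(e)–R(e)`, `D(e)–R(e)`; chain edges `D(eⱼ)–U(e_{j+1})`; and `s–U(e₁)`, `D(e_m)–t`. -/
def adj16 (n m : ℕ) (edges : Fin m → Fin n × Fin n) : V16 n m → V16 n m → Bool
  | Sum.inl (Sum.inl i), Sum.inl (Sum.inr i') => i == i'
  | Sum.inl (Sum.inl i), Sum.inr (Sum.inl (j, c)) =>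
      (c == 2 && (edges j).1 == i) || (c == 3 && (edges j).2 == i)
  | Sum.inr (Sum.inl (j, c)), Sum.inr (Sum.inl (j', c')) =>
      (j == j' && ((c == 2 && (c' == 0 || c' == 1)) || (c == 0 && c' == 3) ||
        (c == 1 && c' == 3))) ||
      (j'.val == j.val + 1 && c == 1 && c' == 0)
  | Sum.inr (Sum.inr x), Sum.inr (Sum.inl (j, c)) =>
      (x == 0 && j.val == 0 && c == 0) || (x == 1 && j.val + 1 == m && c == 1)
  | _, _ => false

/-- The reduction graph `G'`. -/
def G16 (n m : ℕ) (edges : Fin m → Fin n × Fin n) : SimpleGraph (V16 n m) :=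
  SimpleGraph.fromRel (fun a b => adj16 n m edges a b = true)

instance (n m : ℕ) (edges : Fin m → Fin n × Fin n) : DecidableRel (G16 n m edges).Adj :=
  fun a b => decidable_of_iff _ (SimpleGraph.fromRel_adj _ a b).symm

/-- Node weights: heavy pendant vertices get weight `|V| + 4|E|`, all others weight `1`. -/
def W16 (n m : ℕ) : V16 n m → ℕ
  | Sum.inl (Sum.inr _) => n + 4 * m
  | _ => 1

/-- The closed neighborhood of a finite set of vertices. -/
def nbhd {V : Type*} [Fintype V] [DecidableEq V] (G : SimpleGraph V) [DecidableRel G.Adj]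
    (S : Finset V) : Finset V :=
  S ∪ univ.filter (fun v => ∃ u ∈ S, G.Adj u v)

/-- The weighted exposure cost of a walk: the total weight of the closed neighborhood
of its vertex set. -/
def wcost16 {n m : ℕ} (edges : Fin m → Fin n × Fin n) {a b : V16 n m}
    (p : (G16 n m edges).Walk a b) : ℕ :=
  ∑ u ∈ nbhd (G16 n m edges) p.support.toFinset, W16 n m u



section Aux

variable {V : Type*} {G : SimpleGraph V}

lemma walk_ivt {a b : V} (p : G.Walk a b) (f : V → ℕ)
    (hstep : ∀ d ∈ p.darts, f d.toProd.2 ≤ f d.toProd.1 + 1)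
    (L : ℕ) (hL1 : f a ≤ L) (hL2 : L ≤ f b) : ∃ u ∈ p.support, f u = L := by
  induction p with
  | nil => exact ⟨_, by simp, le_antisymm hL1 hL2⟩
  | @cons a c b h q ih =>
    by_cases hc : f c ≤ L
    · obtain ⟨u, hu, hfu⟩ := ih (fun d hd => hstep d (by simp [hd])) hc hL2
      exact ⟨u, by simp [hu], hfu⟩
    · refine ⟨a, by simp, le_antisymm hL1 ?_⟩
      have := hstep ⟨(a, c), h⟩ (by simp)
      simp at this
      omega

lemma walk_adj_support {a b : V} (p : G.Walk a b) (hp : ¬ p.Nil) :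
    ∀ v ∈ p.support, ∃ u ∈ p.support, G.Adj v u := by
  induction p with
  | nil => simp at hp
  | @cons a c b h q ih =>
    intro v hv
    rw [SimpleGraph.Walk.support_cons, List.mem_cons] at hv
    rcases hv with rfl | hv
    · exact ⟨c, by simp [SimpleGraph.Walk.start_mem_support], h⟩
    · cases q with
      | nil =>
        simp at hv
        subst hv
        exact ⟨a, by simp, h.symm⟩
      | cons h2 q2 =>
        obtain ⟨u, hu, hadj⟩ := ih SimpleGraph.Walk.not_nil_cons v hv
        refine ⟨u, ?_, hadj⟩
        simp only [SimpleGraph.Walk.support_cons, List.mem_cons] at hu ⊢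
        tauto

lemma mem_nbhd [Fintype V] [DecidableEq V] [DecidableRel G.Adj] (S : Finset V) (v : V) :
    v ∈ nbhd G S ↔ v ∈ S ∨ ∃ u ∈ S, G.Adj u v := by
  simp [nbhd]

end Aux

section Main

variable {n m : ℕ} {edges : Fin m → Fin n × Fin n}

lemma g16_adj_iff (a b : V16 n m) :
    (G16 n m edges).Adj a b ↔ a ≠ b ∧
      (adj16 n m edges a b = true ∨ adj16 n m edges b a = true) :=
  SimpleGraph.fromRel_adj _ a b

end Main

section Lvl
variable {n m : ℕ} {edges : Fin m → Fin n × Fin n}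

lemma f40 : ((0:Fin 4):ℕ) = 0 := rfl
lemma f41 : ((1:Fin 4):ℕ) = 1 := rfl
lemma f42 : ((2:Fin 4):ℕ) = 2 := rfl
lemma f43 : ((3:Fin 4):ℕ) = 3 := rfl
lemma f20 : ((0:Fin 2):ℕ) = 0 := rfl
lemma f21 : ((1:Fin 2):ℕ) = 1 := rfl

def lvl {n m : ℕ} : V16 n m → ℕ
  | Sum.inl _ => 0
  | Sum.inr (Sum.inl (j, c)) => 3 * j.val + (if c.val = 0 then 1 else if c.val = 1 then 3 else 2)
  | Sum.inr (Sum.inr x) => if x.val = 0 then 0 else 3 * m + 1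

lemma lvl_step_gg (j j' : Fin m) (c c' : Fin 4)
    (h : adj16 n m edges (Sum.inr (Sum.inl (j, c))) (Sum.inr (Sum.inl (j', c'))) = true) :
    lvl (Sum.inr (Sum.inl (j', c')) : V16 n m) = lvl (Sum.inr (Sum.inl (j, c)) : V16 n m) + 1 ∨
    lvl (Sum.inr (Sum.inl (j, c)) : V16 n m) = lvl (Sum.inr (Sum.inl (j', c')) : V16 n m) + 1 := by
  simp only [adj16, Bool.or_eq_true, Bool.and_eq_true, beq_iff_eq] at h
  rcases h with ⟨rfl, ⟨rfl, rfl | rfl⟩ | ⟨rfl, rfl⟩ | ⟨rfl, rfl⟩⟩ | ⟨⟨h1, rfl⟩, rfl⟩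
  all_goals simp_all [lvl, f40, f41, f42, f43] <;> omega

lemma lvl_step_sg (x : Fin 2) (j : Fin m) (c : Fin 4)
    (h : adj16 n m edges (Sum.inr (Sum.inr x)) (Sum.inr (Sum.inl (j, c))) = true) :
    lvl (Sum.inr (Sum.inl (j, c)) : V16 n m) = lvl (Sum.inr (Sum.inr x) : V16 n m) + 1 ∨
    lvl (Sum.inr (Sum.inr x) : V16 n m) = lvl (Sum.inr (Sum.inl (j, c)) : V16 n m) + 1 := by
  simp only [adj16, Bool.or_eq_true, Bool.and_eq_true, beq_iff_eq] at h
  rcases h with ⟨⟨rfl, h2⟩, rfl⟩ | ⟨⟨rfl, h2⟩, rfl⟩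
  all_goals simp_all [lvl, f40, f41, f20, f21] <;> omega

lemma lvl_step {u v : V16 n m} (hu : ∀ w, u ≠ Sum.inl w) (hv : ∀ w, v ≠ Sum.inl w)
    (h : adj16 n m edges u v = true) : lvl v = lvl u + 1 ∨ lvl u = lvl v + 1 := by
  match u, v with
  | Sum.inl w, _ => exact absurd rfl (hu w)
  | _, Sum.inl w => exact absurd rfl (hv w)
  | Sum.inr (Sum.inl (j, c)), Sum.inr (Sum.inl (j', c')) => exact lvl_step_gg j j' c c' h
  | Sum.inr (Sum.inr x), Sum.inr (Sum.inl (j, c)) => exact lvl_step_sg x j c h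
  | Sum.inr (Sum.inl (j, c)), Sum.inr (Sum.inr x) => simp [adj16] at h
  | Sum.inr (Sum.inr x), Sum.inr (Sum.inr y) => simp [adj16] at h

end Lvl

section Fwd
variable {n m : ℕ} {edges : Fin m → Fin n × Fin n}

lemma adj16_hat_left (i : Fin n) (a : V16 n m) :
    adj16 n m edges (Sum.inl (Sum.inr i)) a = false := by
  rcases a with (i'|i')|(⟨j,c⟩|x) <;> rfl

lemma adj16_to_hat (i : Fin n) (a : V16 n m)
    (h : adj16 n m edges a (Sum.inl (Sum.inr i)) = true) : a = Sum.inl (Sum.inl i) := by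
  rcases a with (i'|i')|(⟨j,c⟩|x) <;> simp_all [adj16]

lemma lvl_s : lvl (s16 : V16 n m) = 0 := rfl
lemma lvl_t : lvl (t16 : V16 n m) = 3 * m + 1 := rfl

lemma lvl_classify (u : V16 n m) (hu : ∀ w, u ≠ Sum.inl w) (j : ℕ) (hj : j < m) :
    (lvl u = 3 * j + 1 → u = Sum.inr (Sum.inl (⟨j, hj⟩, 2+2))) ∧
    (lvl u = 3 * j + 3 → u = Sum.inr (Sum.inl (⟨j, hj⟩, 1))) ∧
    (lvl u = 3 * j + 2 →
      u = Sum.inr (Sum.inl (⟨j, hj⟩, 2)) ∨ u = Sum.inr (Sum.inl (⟨j, hj⟩, 3))) := by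
  match u with
  | Sum.inl w => exact absurd rfl (hu w)
  | Sum.inr (Sum.inl (j', c)) =>
    have hc := c.isLt
    have h4 : (2+2 : Fin 4) = ⟨0, by omega⟩ := rfl
    simp only [lvl, h4, Sum.inr.injEq, Sum.inl.injEq, Prod.mk.injEq, Fin.ext_iff]
    have : c.val = 0 ∨ c.val = 1 ∨ c.val = 2 ∨ c.val = 3 := by omega
    rcases this with h | h | h | h <;> simp [h, f40, f41, f42, f43] <;> omega
  | Sum.inr (Sum.inr x) =>
    have hx := x.isLt
    simp only [lvl]
    refine ⟨?_, ?_, ?_⟩ <;> intro hl <;> exfalso <;> split_ifs at hl <;> omega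

end Fwd

section Bwd
variable {n m : ℕ} {edges : Fin m → Fin n × Fin n}

/-- gadget choice: L if first endpoint covered, else R. -/
def ch (C : Finset (Fin n)) (edges : Fin m → Fin n × Fin n) (j : Fin m) : Fin 4 :=
  if (edges j).1 ∈ C then 2 else 3

lemma ch_or (C : Finset (Fin n)) (j : Fin m) :
    ch C edges j = 2 ∨ ch C edges j = 3 := by
  unfold ch; split_ifs <;> simp

lemma adj_U_ch (C : Finset (Fin n)) (j : Fin m) :
    (G16 n m edges).Adj (Sum.inr (Sum.inl (j, 0))) (Sum.inr (Sum.inl (j, ch C edges j))) := by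
  rw [g16_adj_iff]
  rcases ch_or C j (edges := edges) with h | h <;> rw [h]
  · exact ⟨by simp, Or.inr (by simp [adj16])⟩
  · exact ⟨by simp, Or.inl (by simp [adj16])⟩

lemma adj_ch_D (C : Finset (Fin n)) (j : Fin m) :
    (G16 n m edges).Adj (Sum.inr (Sum.inl (j, ch C edges j))) (Sum.inr (Sum.inl (j, 1))) := by
  rw [g16_adj_iff]
  rcases ch_or C j (edges := edges) with h | h <;> rw [h]
  · exact ⟨by simp, Or.inl (by simp [adj16])⟩
  · exact ⟨by simp, Or.inr (by simp [adj16])⟩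

lemma adj_D_U (j j' : Fin m) (h : (j' : ℕ) = (j : ℕ) + 1) :
    (G16 n m edges).Adj (Sum.inr (Sum.inl (j, 1))) (Sum.inr (Sum.inl (j', 0))) := by
  rw [g16_adj_iff]
  refine ⟨by simp [Fin.ext_iff] <;> omega, Or.inl ?_⟩
  simp [adj16, h]

lemma adj_D_t (j : Fin m) (h : (j : ℕ) + 1 = m) :
    (G16 n m edges).Adj (Sum.inr (Sum.inl (j, 1))) t16 := by
  rw [g16_adj_iff]
  exact ⟨by simp [t16], Or.inr (by simp [adj16, t16, h])⟩

lemma adj_s_U (j : Fin m) (h : (j : ℕ) = 0) :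
    (G16 n m edges).Adj s16 (Sum.inr (Sum.inl (j, 0))) := by
  rw [g16_adj_iff]
  exact ⟨by simp [s16], Or.inl (by simp [adj16, s16, h])⟩

def bwalk (C : Finset (Fin n)) (edges : Fin m → Fin n × Fin n) (j : ℕ) (hj : j < m) :
    (G16 n m edges).Walk (Sum.inr (Sum.inl (⟨j, hj⟩, 0))) t16 :=
  SimpleGraph.Walk.cons (adj_U_ch C ⟨j, hj⟩)
    (SimpleGraph.Walk.cons (adj_ch_D C ⟨j, hj⟩)
      (if h' : j + 1 < m then
        SimpleGraph.Walk.cons (adj_D_U ⟨j, hj⟩ ⟨j+1, h'⟩ rfl) (bwalk C edges (j+1) h')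
      else
        SimpleGraph.Walk.cons (adj_D_t ⟨j, hj⟩ (by show j + 1 = m; omega)) SimpleGraph.Walk.nil))
termination_by m - j

theorem bwalk_support (C : Finset (Fin n)) (j : ℕ) (hj : j < m) (v : V16 n m) :
    v ∈ (bwalk C edges j hj).support ↔ v = t16 ∨ ∃ (j' : ℕ) (hj' : j' < m) (c : Fin 4),
      j ≤ j' ∧ (c = 0 ∨ c = ch C edges ⟨j', hj'⟩ ∨ c = 1) ∧
      v = Sum.inr (Sum.inl (⟨j', hj'⟩, c)) := by
  rw [bwalk]
  by_cases h' : j + 1 < m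
  · rw [dif_pos h']
    simp only [SimpleGraph.Walk.support_cons, List.mem_cons,
      bwalk_support C (j+1) h' v]
    constructor
    · rintro (rfl | rfl | rfl | (rfl | ⟨j', hj', c, hle, hc, rfl⟩))
      · exact Or.inr ⟨j, hj, 0, le_refl j, Or.inl rfl, rfl⟩
      · exact Or.inr ⟨j, hj, _, le_refl j, Or.inr (Or.inl rfl), rfl⟩
      · exact Or.inr ⟨j, hj, 1, le_refl j, Or.inr (Or.inr rfl), rfl⟩
      · exact Or.inl rfl
      · exact Or.inr ⟨j', hj', c, by omega, hc, rfl⟩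
    · rintro (rfl | ⟨j', hj', c, hle, hc, rfl⟩)
      · exact Or.inr (Or.inr (Or.inr (Or.inl rfl)))
      · rcases Nat.eq_or_lt_of_le hle with rfl | hlt
        · rcases hc with rfl | rfl | rfl
          · exact Or.inl rfl
          · exact Or.inr (Or.inl rfl)
          · exact Or.inr (Or.inr (Or.inl rfl))
        · exact Or.inr (Or.inr (Or.inr (Or.inr ⟨j', hj', c, by omega, hc, rfl⟩)))
  · rw [dif_neg h']
    simp only [SimpleGraph.Walk.support_cons, SimpleGraph.Walk.support_nil, List.mem_cons,
      List.mem_singleton]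
    constructor
    · rintro (rfl | rfl | rfl | rfl | h)
      · exact Or.inr ⟨j, hj, 0, le_refl j, Or.inl rfl, rfl⟩
      · exact Or.inr ⟨j, hj, _, le_refl j, Or.inr (Or.inl rfl), rfl⟩
      · exact Or.inr ⟨j, hj, 1, le_refl j, Or.inr (Or.inr rfl), rfl⟩
      · exact Or.inl rfl
      · simp at h
    · rintro (rfl | ⟨j', hj', c, hle, hc, rfl⟩)
      · exact Or.inr (Or.inr (Or.inr (Or.inl rfl)))
      · have : j' = j := by omega
        subst this
        rcases hc with rfl | rfl | rfl
        · exact Or.inl rfl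
        · exact Or.inr (Or.inl rfl)
        · exact Or.inr (Or.inr (Or.inl rfl))
termination_by m - j

end Bwd

section Bwd2
variable {n m : ℕ} {edges : Fin m → Fin n × Fin n}

lemma gad_notMem_bwalk (C : Finset (Fin n)) (j' : ℕ) (hj' : j' < m) (j : Fin m) (c : Fin 4)
    (h : (j : ℕ) < j') : Sum.inr (Sum.inl (j, c)) ∉ (bwalk C edges j' hj').support := by
  rw [bwalk_support]
  rintro (h1 | ⟨j2, hj2, c2, hle, hc2, heq⟩)
  · exact absurd h1 (by simp [t16])
  · simp only [Sum.inr.injEq, Sum.inl.injEq, Prod.mk.injEq, Fin.ext_iff, f40, f41, f42, f43] at heq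
    omega

theorem bwalk_isPath (C : Finset (Fin n)) (j : ℕ) (hj : j < m) :
    (bwalk C edges j hj).IsPath := by
  have hch := ch_or C (⟨j, hj⟩ : Fin m) (edges := edges)
  rw [bwalk]
  by_cases h' : j + 1 < m
  · rw [dif_pos h']
    simp only [SimpleGraph.Walk.cons_isPath_iff, SimpleGraph.Walk.support_cons, List.mem_cons]
    refine ⟨⟨⟨bwalk_isPath C (j+1) h',
      gad_notMem_bwalk C (j+1) h' ⟨j, hj⟩ 1 (by exact Nat.lt_succ_self j)⟩, ?_⟩, ?_⟩
    · rintro (heq | hmem)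
      · rcases hch with h2 | h2 <;> rw [h2] at heq <;>
          simp [Prod.ext_iff, Fin.ext_iff, f40, f41, f42, f43] at heq
      · exact gad_notMem_bwalk C (j+1) h' ⟨j, hj⟩ _ (by exact Nat.lt_succ_self j) hmem
    · rintro (heq | heq | hmem)
      · rcases hch with h2 | h2 <;> rw [h2] at heq <;>
          simp [Prod.ext_iff, Fin.ext_iff, f40, f41, f42, f43] at heq
      · simp [Prod.ext_iff, Fin.ext_iff, f40, f41, f42, f43] at heq
      · exact gad_notMem_bwalk C (j+1) h' ⟨j, hj⟩ _ (by exact Nat.lt_succ_self j) hmem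
  · rw [dif_neg h']
    simp only [SimpleGraph.Walk.cons_isPath_iff, SimpleGraph.Walk.support_cons,
      SimpleGraph.Walk.support_nil, List.mem_cons, List.mem_singleton,
      SimpleGraph.Walk.IsPath.nil, true_and, List.not_mem_nil, or_false]
    rcases hch with h2 | h2 <;> rw [h2] <;>
      refine ⟨⟨by simp [t16, Prod.ext_iff, Fin.ext_iff, f40, f41, f42, f43], ?_⟩, ?_⟩ <;>
      simp [t16, Prod.ext_iff, Fin.ext_iff, f40, f41, f42, f43]
termination_by m - j

end Bwd2

section Bwd3
variable {n m : ℕ} {edges : Fin m → Fin n × Fin n}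

lemma adj16_to_st (v : V16 n m) (x : Fin 2) :
    adj16 n m edges v (Sum.inr (Sum.inr x)) = false := by
  rcases v with (_|_)|(⟨j,c⟩|y) <;> rfl

lemma adj16_st_to {v : V16 n m} {x : Fin 2}
    (h : adj16 n m edges (Sum.inr (Sum.inr x)) v = true) :
    ∃ j c, v = Sum.inr (Sum.inl (j, c)) := by
  rcases v with (_|_)|(⟨j,c⟩|y) <;> simp [adj16] at h ⊢

lemma adj16_gad_to {j : Fin m} {c : Fin 4} {v : V16 n m}
    (h : adj16 n m edges (Sum.inr (Sum.inl (j, c))) v = true) :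
    ∃ j' c', v = Sum.inr (Sum.inl (j', c')) := by
  rcases v with (_|_)|(⟨j',c'⟩|y) <;> simp [adj16] at h ⊢

lemma adj16_to_gad {j : Fin m} {c : Fin 4} {v : V16 n m}
    (h : adj16 n m edges v (Sum.inr (Sum.inl (j, c))) = true) :
    (∃ j' c', v = Sum.inr (Sum.inl (j', c'))) ∨ (∃ x : Fin 2, v = Sum.inr (Sum.inr x)) ∨
    (c = 2 ∧ v = Sum.inl (Sum.inl (edges j).1)) ∨ (c = 3 ∧ v = Sum.inl (Sum.inl (edges j).2)) := by
  rcases v with (i|i)|(⟨j',c'⟩|y)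
  · simp only [adj16, Bool.or_eq_true, Bool.and_eq_true, beq_iff_eq] at h
    rcases h with ⟨rfl, rfl⟩ | ⟨rfl, rfl⟩
    · exact Or.inr (Or.inr (Or.inl ⟨rfl, rfl⟩))
    · exact Or.inr (Or.inr (Or.inr ⟨rfl, rfl⟩))
  · simp [adj16] at h
  · exact Or.inl ⟨j', c', rfl⟩
  · exact Or.inr (Or.inl ⟨y, rfl⟩)

lemma backward_dir (hm : 1 ≤ m) (C : Finset (Fin n))
    (hcover : ∀ j, (edges j).1 ∈ C ∨ (edges j).2 ∈ C) :
    ∃ p : (G16 n m edges).Walk s16 t16, p.IsPath ∧ (∀ i : Fin n, orig i ∉ p.support) ∧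
      wcost16 edges p ≤ 4 * m + C.card + 2 := by
  have h0 : (0 : ℕ) < m := hm
  refine ⟨SimpleGraph.Walk.cons (adj_s_U ⟨0, h0⟩ rfl) (bwalk C edges 0 h0), ?_, ?_, ?_⟩
  · rw [SimpleGraph.Walk.cons_isPath_iff]
    refine ⟨bwalk_isPath C 0 h0, ?_⟩
    rw [bwalk_support]
    rintro (h1 | ⟨j', hj', c, _, _, h1⟩) <;>
      simp [s16, t16, Fin.ext_iff, f20, f21] at h1
  · intro i
    rw [SimpleGraph.Walk.support_cons, List.mem_cons]
    rintro (h1 | h1)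
    · simp [orig, s16] at h1
    · rw [bwalk_support] at h1
      rcases h1 with h1 | ⟨j', hj', c, _, _, h1⟩ <;> simp [orig, t16] at h1
  · -- cost bound
    set P := SimpleGraph.Walk.cons (adj_s_U (⟨0, h0⟩ : Fin m) rfl) (bwalk C edges 0 h0) with hP
    set T : Finset (V16 n m) := ({s16, t16} : Finset (V16 n m)) ∪
      (univ : Finset (Fin m × Fin 4)).image (fun jc => Sum.inr (Sum.inl jc)) ∪
      C.image orig with hT
    have hsupT : ∀ v ∈ P.support, v ∈ T := by
      intro v hv
      rw [hP, SimpleGraph.Walk.support_cons, List.mem_cons, bwalk_support] at hv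
      rcases hv with rfl | rfl | ⟨j', hj', c, _, _, rfl⟩
      · simp [hT]
      · simp [hT]
      · simp [hT]
    have hsub : nbhd (G16 n m edges) P.support.toFinset ⊆ T := by
      intro v hv
      rw [mem_nbhd] at hv
      rcases hv with hv | ⟨u, hu, hadj⟩
      · exact hsupT v (List.mem_toFinset.mp hv)
      · rw [List.mem_toFinset] at hu
        rw [g16_adj_iff] at hadj
        -- classify u via support
        rw [hP, SimpleGraph.Walk.support_cons, List.mem_cons, bwalk_support] at hu
        rcases hu with rfl | rfl | ⟨j', hj', c, _, hc, rfl⟩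
        · -- u = s16
          rcases hadj.2 with h | h
          · obtain ⟨j, c, rfl⟩ := adj16_st_to h
            simp [hT]
          · simp [s16, adj16_to_st] at h
        · -- u = t16
          rcases hadj.2 with h | h
          · obtain ⟨j, c, rfl⟩ := adj16_st_to h
            simp [hT]
          · simp [t16, adj16_to_st] at h
        · -- u = gadget
          rcases hadj.2 with h | h
          · obtain ⟨j2, c2, rfl⟩ := adj16_gad_to h
            simp [hT]
          · rcases adj16_to_gad h with ⟨j2, c2, rfl⟩ | ⟨x, rfl⟩ | ⟨hc2, rfl⟩ | ⟨hc2, rfl⟩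
            · simp [hT]
            · fin_cases x <;> simp [hT, s16, t16]
            · -- c = 2 hence ch = 2 hence (edges j').1 ∈ C
              subst hc2
              have hin : (edges ⟨j', hj'⟩).1 ∈ C := by
                rcases hc with hc | hc | hc
                · simp [f40, f42, Fin.ext_iff] at hc
                · rw [ch] at hc
                  split_ifs at hc with hmem
                  · exact hmem
                  · simp [f42, f43, Fin.ext_iff] at hc
                · simp [f41, f42, Fin.ext_iff] at hc
              simp only [hT, mem_union, mem_image]
              exact Or.inr ⟨_, hin, rfl⟩
            · subst hc2
              have hin : (edges ⟨j', hj'⟩).2 ∈ C := by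
                rcases hc with hc | hc | hc
                · simp [f40, f43, Fin.ext_iff] at hc
                · rw [ch] at hc
                  split_ifs at hc with hmem
                  · simp [f42, f43, Fin.ext_iff] at hc
                  · exact (hcover ⟨j', hj'⟩).resolve_left hmem
                · simp [f41, f43, Fin.ext_iff] at hc
              simp only [hT, mem_union, mem_image]
              exact Or.inr ⟨_, hin, rfl⟩
    have hT1 : ∀ u ∈ T, W16 n m u = 1 := by
      intro u hu
      rcases u with (i|i)|(⟨j,c⟩|x)
      · rfl
      · exfalso
        simp [hT, s16, t16, orig] at hu
      · rfl
      · rfl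
    calc wcost16 edges P ≤ ∑ u ∈ T, W16 n m u :=
          Finset.sum_le_sum_of_subset hsub
      _ = T.card := by
          rw [Finset.sum_congr rfl hT1, Finset.sum_const, smul_eq_mul, mul_one]
      _ ≤ 4 * m + C.card + 2 := by
          have h1 := Finset.card_union_le (({s16, t16} : Finset (V16 n m)) ∪
            (univ : Finset (Fin m × Fin 4)).image (fun jc => Sum.inr (Sum.inl jc)))
            (C.image orig)
          have h2 := Finset.card_union_le ({s16, t16} : Finset (V16 n m))
            ((univ : Finset (Fin m × Fin 4)).image (fun jc => (Sum.inr (Sum.inl jc) : V16 n m)))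
          have h3 : ((univ : Finset (Fin m × Fin 4)).image
              (fun jc => (Sum.inr (Sum.inl jc) : V16 n m))).card ≤ 4 * m := by
            calc _ ≤ (univ : Finset (Fin m × Fin 4)).card := Finset.card_image_le
              _ = 4 * m := by simp [Fintype.card_prod]; ring
          have h4 : (C.image (orig : Fin n → V16 n m)).card ≤ C.card := Finset.card_image_le
          have h5 : ({s16, t16} : Finset (V16 n m)).card ≤ 2 := Finset.card_insert_le _ _ |>.trans (by simp)
          rw [hT]
          omega

end Bwd3

section Fwd2
variable {n m : ℕ} {edges : Fin m → Fin n × Fin n}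

lemma forward_dir (p : (G16 n m edges).Walk s16 t16)
    (horig : ∀ i : Fin n, orig i ∉ p.support) :
    ∃ C : Finset (Fin n), (∀ j, (edges j).1 ∈ C ∨ (edges j).2 ∈ C) ∧
      2 + 4 * m + C.card ≤ wcost16 edges p := by
  have hne : (s16 : V16 n m) ≠ t16 := by simp [s16, t16, Fin.ext_iff, f20, f21]
  have hnil : ¬ p.Nil := SimpleGraph.Walk.not_nil_of_ne hne
  -- no hat vertex on the walk
  have hhat : ∀ i : Fin n, (Sum.inl (Sum.inr i) : V16 n m) ∉ p.support := by
    intro i hi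
    obtain ⟨u, hu, hadj⟩ := walk_adj_support p hnil _ hi
    rw [g16_adj_iff] at hadj
    rcases hadj.2 with h | h
    · rw [adj16_hat_left] at h; simp at h
    · have := adj16_to_hat i u h
      subst this
      exact horig i hu
  have hcore : ∀ v ∈ p.support, ∀ w, v ≠ Sum.inl w := by
    rintro v hv (i | i) rfl
    · exact horig i hv
    · exact hhat i hv
  have hstep : ∀ d ∈ p.darts, lvl d.toProd.2 ≤ lvl d.toProd.1 + 1 := by
    intro d hd
    have h1 := SimpleGraph.Walk.dart_fst_mem_support_of_mem_darts p hd
    have h2 := SimpleGraph.Walk.dart_snd_mem_support_of_mem_darts p hd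
    have hadj := d.adj
    rw [g16_adj_iff] at hadj
    rcases hadj.2 with h | h
    · rcases lvl_step (hcore _ h1) (hcore _ h2) h with h' | h' <;> omega
    · rcases lvl_step (hcore _ h2) (hcore _ h1) h with h' | h' <;> omega
  have hmem : ∀ L, L ≤ 3 * m + 1 → ∃ u ∈ p.support, lvl u = L := by
    intro L hL
    exact walk_ivt p lvl hstep L (by rw [lvl_s]; omega) (by rw [lvl_t]; exact hL)
  -- the distinguished support vertices
  have hU : ∀ j : Fin m, (Sum.inr (Sum.inl (j, 0)) : V16 n m) ∈ p.support := by
    intro j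
    obtain ⟨u, hu, hl⟩ := hmem (3 * j + 1) (by have := j.isLt; omega)
    have := (lvl_classify u (hcore u hu) j j.isLt).1 hl
    rw [this] at hu
    have he : ((⟨(j:ℕ), j.isLt⟩ : Fin m), (2+2 : Fin 4)) = (j, (0 : Fin 4)) := by
      simp [Fin.ext_iff]
    rwa [he] at hu
  have hD : ∀ j : Fin m, (Sum.inr (Sum.inl (j, 1)) : V16 n m) ∈ p.support := by
    intro j
    obtain ⟨u, hu, hl⟩ := hmem (3 * j + 3) (by have := j.isLt; omega)
    have := (lvl_classify u (hcore u hu) j j.isLt).2.1 hl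
    rw [this] at hu
    have he : ((⟨(j:ℕ), j.isLt⟩ : Fin m), (1 : Fin 4)) = (j, (1 : Fin 4)) := by
      simp [Fin.ext_iff]
    rwa [he] at hu
  have hLR : ∀ j : Fin m, (Sum.inr (Sum.inl (j, 2)) : V16 n m) ∈ p.support ∨
      (Sum.inr (Sum.inl (j, 3)) : V16 n m) ∈ p.support := by
    intro j
    obtain ⟨u, hu, hl⟩ := hmem (3 * j + 2) (by have := j.isLt; omega)
    have hj : ((⟨(j:ℕ), j.isLt⟩ : Fin m)) = j := by simp
    rcases (lvl_classify u (hcore u hu) j j.isLt).2.2 hl with h | h <;>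
      rw [h, hj] at hu
    · exact Or.inl hu
    · exact Or.inr hu
  set N := nbhd (G16 n m edges) p.support.toFinset with hN
  have hhatN : ∀ i : Fin n, (Sum.inl (Sum.inr i) : V16 n m) ∉ N := by
    intro i hi
    rw [hN, mem_nbhd] at hi
    rcases hi with hi | ⟨u, hu, hadj⟩
    · exact hhat i (List.mem_toFinset.mp hi)
    · rw [g16_adj_iff] at hadj
      rcases hadj.2 with h | h
      · have := adj16_to_hat i u h
        subst this
        exact horig i (List.mem_toFinset.mp hu)
      · rw [adj16_hat_left] at h; simp at h
  have hW : ∀ u ∈ N, W16 n m u = 1 := by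
    intro u hu
    rcases u with (i|i)|(⟨j,c⟩|x)
    · rfl
    · exact absurd hu (hhatN i)
    · rfl
    · rfl
  have hwc : wcost16 edges p = N.card := by
    rw [wcost16, Finset.sum_congr rfl hW, Finset.sum_const, smul_eq_mul, mul_one]
  -- the vertex cover
  set C : Finset (Fin n) := univ.filter (fun i => (Sum.inl (Sum.inl i) : V16 n m) ∈ N) with hC
  refine ⟨C, ?_, ?_⟩
  · intro j
    rcases hLR j with h | h
    · left
      rw [hC, mem_filter]
      refine ⟨mem_univ _, ?_⟩
      rw [hN, mem_nbhd]
      refine Or.inr ⟨_, List.mem_toFinset.mpr h, ?_⟩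
      rw [g16_adj_iff]
      exact ⟨by simp, Or.inr (by simp [adj16])⟩
    · right
      rw [hC, mem_filter]
      refine ⟨mem_univ _, ?_⟩
      rw [hN, mem_nbhd]
      refine Or.inr ⟨_, List.mem_toFinset.mpr h, ?_⟩
      rw [g16_adj_iff]
      exact ⟨by simp, Or.inr (by simp [adj16])⟩
  · -- cardinality bound
    set A : Finset (V16 n m) := {s16, t16} with hA
    set B : Finset (V16 n m) :=
      (univ : Finset (Fin m × Fin 4)).image (fun jc => Sum.inr (Sum.inl jc)) with hB
    set D : Finset (V16 n m) := C.image (fun i => Sum.inl (Sum.inl i)) with hD2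
    have hsub : A ∪ B ∪ D ⊆ N := by
      intro v hv
      simp only [hA, hB, hD2, mem_union, mem_insert, mem_singleton, mem_image,
        mem_univ, true_and] at hv
      rcases hv with ((rfl | rfl) | ⟨⟨j, c⟩, rfl⟩) | ⟨i, hi, rfl⟩
      · rw [hN, mem_nbhd]
        exact Or.inl (List.mem_toFinset.mpr p.start_mem_support)
      · rw [hN, mem_nbhd]
        exact Or.inl (List.mem_toFinset.mpr p.end_mem_support)
      · -- gadget vertex (j, c)
        rw [hN, mem_nbhd]
        have hc : c = 0 ∨ c = 1 ∨ c = 2 ∨ c = 3 := by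
          have h4 := c.isLt
          have : c.val = 0 ∨ c.val = 1 ∨ c.val = 2 ∨ c.val = 3 := by omega
          rcases this with h | h | h | h
          · exact Or.inl (Fin.ext h)
          · exact Or.inr (Or.inl (Fin.ext h))
          · exact Or.inr (Or.inr (Or.inl (Fin.ext h)))
          · exact Or.inr (Or.inr (Or.inr (Fin.ext h)))
        rcases hc with rfl | rfl | rfl | rfl
        · exact Or.inl (List.mem_toFinset.mpr (hU j))
        · exact Or.inl (List.mem_toFinset.mpr (hD j))
        · refine Or.inr ⟨_, List.mem_toFinset.mpr (hU j), ?_⟩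
          rw [g16_adj_iff]
          refine ⟨by simp [Prod.ext_iff, Fin.ext_iff, f40, f42], Or.inr (by simp [adj16])⟩
        · refine Or.inr ⟨_, List.mem_toFinset.mpr (hU j), ?_⟩
          rw [g16_adj_iff]
          refine ⟨by simp [Prod.ext_iff, Fin.ext_iff, f40, f43], Or.inl (by simp [adj16])⟩
      · rw [hC, mem_filter] at hi
        exact hi.2
    have hdisj1 : Disjoint A B := by
      rw [Finset.disjoint_left]
      rintro v hv hv2
      simp only [hA, mem_insert, mem_singleton] at hv
      simp only [hB, mem_image] at hv2
      obtain ⟨jc, _, rfl⟩ := hv2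
      rcases hv with h | h <;> simp [s16, t16] at h
    have hdisj2 : Disjoint (A ∪ B) D := by
      rw [Finset.disjoint_left]
      rintro v hv hv2
      simp only [hD2, mem_image] at hv2
      obtain ⟨i, _, rfl⟩ := hv2
      simp only [hA, hB, mem_union, mem_insert, mem_singleton, mem_image] at hv
      rcases hv with ((h | h) | ⟨jc, _, h⟩) <;> simp [s16, t16] at h
    have hcA : A.card = 2 := by
      rw [hA, Finset.card_insert_of_notMem (by simp [hne]), Finset.card_singleton]
    have hcB : B.card = 4 * m := by
      rw [hB, Finset.card_image_of_injective _ (fun a b hab => by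
        simpa using hab)]
      simp [Fintype.card_prod]
      ring
    have hcD : D.card = C.card := by
      rw [hD2, Finset.card_image_of_injective _ (fun a b hab => by simpa using hab)]
    have := Finset.card_le_card hsub
    rw [Finset.card_union_of_disjoint hdisj2, Finset.card_union_of_disjoint hdisj1,
      hcA, hcB, hcD] at this
    omega

end Fwd2

/-- In the vertex-cover reduction graph `G'`, there exists an `s–t` path avoiding the
original vertices of `G` whose weighted cost is `4|E| + k` (plus the weight `2`
contributed by the endpoints `s,t` themselves) if and only if `G` has a vertex cover of
size at most `k`. -/
theorem secluded_path_iff_vertex_cover (n m : ℕ) (hm : 1 ≤ m)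
    (edges : Fin m → Fin n × Fin n)
    (hsimple : ∀ j, (edges j).1 ≠ (edges j).2)
    (hdeg3 : ∀ i : Fin n,
      (univ.filter (fun j => (edges j).1 = i ∨ (edges j).2 = i)).card ≤ 3)
    (k : ℕ) :
    (∃ p : (G16 n m edges).Walk s16 t16, p.IsPath ∧ (∀ i : Fin n, orig i ∉ p.support) ∧
        wcost16 edges p ≤ 4 * m + k + 2) ↔
      (∃ C : Finset (Fin n), (∀ j, (edges j).1 ∈ C ∨ (edges j).2 ∈ C) ∧ C.card ≤ k) := by
  
  constructor
  · rintro ⟨p, hpath, horig, hcost⟩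
    obtain ⟨C, hcov, hcard⟩ := forward_dir p horig
    exact ⟨C, hcov, by omega⟩
  · rintro ⟨C, hcov, hcard⟩
    obtain ⟨p, h1, h2, h3⟩ := backward_dir hm C hcov
    exact ⟨p, h1, h2, by omega⟩
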